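/- arXiv:2507.19169 — 2 statements merged into one kernel-verified Lean document; each statement's English description precedes it below -/
import Mathlib

section
/- Suppose that for each bounded Borel function f : S → ℝ the empirical means μ_n(f) = (1/n) Σ_{i=1}^n f(X_i) converge in probability to a degenerate (almost surely constant) random variable. Then the following are equivalent: (i) for each bounded Borel function f the sequence α_n(f) converges in probability; (ii) lim_n P(X_n ∈ B) exists for every Borel set B, and lim_n E[α_n(f)²] = lim_n (E[f(X_n)])² for each bounded Borel function f. -/
open MeasureTheory ProbabilityTheory Filter Topology
open scoped ENNReal NNReal

variable {Ω S : Type*}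

/-- `Filt X n` is the σ-field `𝓕_n = σ(X_1,…,X_n)` generated by the first `n` variables.
Indexing convention: `X i` here denotes the paper's `X_{i+1}`, so that `Filt X 0 = ⊥`. -/
def Filt [MeasurableSpace S] (X : ℕ → Ω → S) (n : ℕ) : MeasurableSpace Ω :=
  ⨆ i ∈ Finset.range n, MeasurableSpace.comap (X i) inferInstance

/-- The predictive mean `α_n(f) = E[f(X_{n+1}) ∣ 𝓕_n]` (here the paper's `X_{n+1}` is `X n`). -/
noncomputable def predMean [MeasurableSpace Ω] [MeasurableSpace S]
    (P : Measure Ω) (X : ℕ → Ω → S) (f : S → ℝ) (n : ℕ) : Ω → ℝ :=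
  P[(fun ω => f (X n ω)) | Filt X n]

/-
(i) ⇒ (ii). The differences `f(X_k) - α_k(f)` are bounded martingale differences, hence
orthogonal in L², so their averages tend to 0 in probability. The Cesàro averages of `α_k(f)`
inherit the limit `l` of `α_n(f)`, so the empirical means `μ_n(f)` converge to `l` as well, and
the hypothesis forces `l` to be a.s. the constant `c`. Bounded convergence then gives
`E α_n(f) = E f(X_n) → c` and `E α_n(f)² → c²`; indicators `f = 1_B` give the first half of (ii).

(ii) ⇒ (i). Applying (ii) to `f` and `f + 1` shows that `a_n = E f(X_n)` converges, say to `m`,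
since `a_n = ((a_n + 1)² - a_n² - 1) / 2`. Then
`E (α_n(f) - m)² = E α_n(f)² - 2 m a_n + m² → 0`, so `α_n(f) → m` in probability.
-/

lemma tendsto_of_tendsto_sq_of_tendsto_add_one_sq {ι : Type*} {l : Filter ι} {a : ι → ℝ}
    {L L' : ℝ} (h : Tendsto (fun n => a n ^ 2) l (𝓝 L))
    (h' : Tendsto (fun n => (a n + 1) ^ 2) l (𝓝 L')) :
    Tendsto a l (𝓝 ((L' - L - 1) / 2)) := by
  refine (((h'.sub h).sub_const 1).div_const 2).congr fun n => ?_
  ring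

namespace MeasureTheory

section InMeasure

variable [MeasurableSpace Ω] {μ : Measure Ω}

lemma TendstoInMeasure.continuous_comp [IsFiniteMeasure μ] {E F : Type*} [PseudoMetricSpace E]
    [PseudoMetricSpace F] {f : ℕ → Ω → E} {g : Ω → E} {φ : E → F} (hφ : Continuous φ)
    (hf : ∀ n, AEStronglyMeasurable (f n) μ) (h : TendstoInMeasure μ f atTop g) :
    TendstoInMeasure μ (fun n ω => φ (f n ω)) atTop (fun ω => φ (g ω)) := by
  rw [exists_seq_tendstoInMeasure_atTop_iff fun n => hφ.comp_aestronglyMeasurable (hf n)]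
  intro ns hns
  obtain ⟨ns', hns', hae⟩ := (h.comp hns.tendsto_atTop).exists_seq_tendsto_ae
  exact ⟨ns', hns', hae.mono fun ω hω => (hφ.tendsto _).comp hω⟩

lemma TendstoInMeasure.add [IsFiniteMeasure μ] {f g : ℕ → Ω → ℝ} {a b : Ω → ℝ}
    (hfm : ∀ n, AEStronglyMeasurable (f n) μ) (hgm : ∀ n, AEStronglyMeasurable (g n) μ)
    (hf : TendstoInMeasure μ f atTop a) (hg : TendstoInMeasure μ g atTop b) :
    TendstoInMeasure μ (fun n ω => f n ω + g n ω) atTop (fun ω => a ω + b ω) := by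
  refine (exists_seq_tendstoInMeasure_atTop_iff (f := fun n ω => f n ω + g n ω)
    fun n => (hfm n).add (hgm n)).2 fun ns hns => ?_
  obtain ⟨ns₁, hns₁, hae₁⟩ := (hf.comp hns.tendsto_atTop).exists_seq_tendsto_ae
  obtain ⟨ns₂, hns₂, hae₂⟩ :=
    (hg.comp (hns.comp hns₁).tendsto_atTop).exists_seq_tendsto_ae
  refine ⟨ns₁ ∘ ns₂, hns₁.comp hns₂, ?_⟩
  filter_upwards [hae₁, hae₂] with ω h₁ h₂
  exact (h₁.comp hns₂.tendsto_atTop).add h₂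

lemma tendstoInMeasure_iff_sub_tendstoInMeasure_zero {f : ℕ → Ω → ℝ} {g : Ω → ℝ} :
    TendstoInMeasure μ f atTop g ↔
      TendstoInMeasure μ (fun n ω => f n ω - g ω) atTop (fun _ => 0) := by
  simp only [TendstoInMeasure, edist_dist, Real.dist_eq, sub_zero]

lemma ae_abs_le_of_tendstoInMeasure {f : ℕ → Ω → ℝ} {g : Ω → ℝ} {C : ℝ}
    (hbd : ∀ n, ∀ᵐ ω ∂μ, |f n ω| ≤ C) (h : TendstoInMeasure μ f atTop g) :
    ∀ᵐ ω ∂μ, |g ω| ≤ C := by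
  obtain ⟨ns, -, hae⟩ := h.exists_seq_tendsto_ae
  filter_upwards [hae, ae_all_iff.2 fun k => hbd (ns k)] with ω hω hbω
  exact le_of_tendsto ((continuous_abs.tendsto _).comp hω) (Eventually.of_forall hbω)

lemma tendsto_integral_of_tendstoInMeasure_of_abs_le [IsFiniteMeasure μ] {f : ℕ → Ω → ℝ}
    {g : Ω → ℝ} {C : ℝ}
    (hfm : ∀ n, AEStronglyMeasurable (f n) μ) (hbd : ∀ n, ∀ᵐ ω ∂μ, |f n ω| ≤ C)
    (h : TendstoInMeasure μ f atTop g) :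
    Tendsto (fun n => ∫ ω, f n ω ∂μ) atTop (𝓝 (∫ ω, g ω ∂μ)) := by
  refine tendsto_of_subseq_tendsto fun ns hns => ?_
  obtain ⟨ms, -, hae⟩ := (h.comp hns).exists_seq_tendsto_ae
  exact ⟨ms, tendsto_integral_of_dominated_convergence (fun _ => C) (fun k => hfm _)
    (integrable_const C) (fun k => hbd _) hae⟩

lemma tendstoInMeasure_zero_of_tendsto_integral_sq [IsFiniteMeasure μ] {f : ℕ → Ω → ℝ}
    (hint : ∀ n, Integrable (fun ω => f n ω ^ 2) μ)
    (h : Tendsto (fun n => ∫ ω, f n ω ^ 2 ∂μ) atTop (𝓝 0)) :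
    TendstoInMeasure μ f atTop (fun _ => 0) := by
  rw [tendstoInMeasure_iff_measureReal_dist]
  intro ε hε
  refine squeeze_zero (fun n => measureReal_nonneg) (fun n => ?_)
    (by simpa using h.div_const (ε ^ 2))
  have hset : {ω | ε ≤ dist (f n ω) 0} = {ω | ε ^ 2 ≤ f n ω ^ 2} := by
    ext ω
    simp only [Set.mem_ofPred_eq, Real.dist_0_eq_abs, ← sq_abs (f n ω)]
    exact (pow_le_pow_iff_left₀ hε.le (abs_nonneg _) two_ne_zero).symm
  rw [hset, le_div_iff₀ (by positivity), mul_comm]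
  exact mul_meas_ge_le_integral_of_nonneg (ae_of_all _ fun ω => sq_nonneg _) (hint n) _

lemma integral_sq_average_le {f : ℕ → Ω → ℝ} (hint : ∀ k, Integrable (fun ω => f k ω ^ 2) μ)
    (n : ℕ) :
    ∫ ω, ((n : ℝ)⁻¹ * ∑ k ∈ Finset.range n, f k ω) ^ 2 ∂μ
      ≤ (n : ℝ)⁻¹ * ∑ k ∈ Finset.range n, ∫ ω, f k ω ^ 2 ∂μ := by
  have hpt : ∀ ω, ((n : ℝ)⁻¹ * ∑ k ∈ Finset.range n, f k ω) ^ 2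
      ≤ (n : ℝ)⁻¹ * ∑ k ∈ Finset.range n, f k ω ^ 2 := fun ω => by
    have h := sq_sum_le_card_mul_sum_sq (s := Finset.range n) (f := fun k => f k ω)
    rw [Finset.card_range] at h
    calc ((n : ℝ)⁻¹ * ∑ k ∈ Finset.range n, f k ω) ^ 2
        = (n : ℝ)⁻¹ ^ 2 * (∑ k ∈ Finset.range n, f k ω) ^ 2 := mul_pow _ _ _
      _ ≤ (n : ℝ)⁻¹ ^ 2 * (n * ∑ k ∈ Finset.range n, f k ω ^ 2) := by gcongr
      _ = (n : ℝ)⁻¹ * ∑ k ∈ Finset.range n, f k ω ^ 2 := by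
        rcases n.eq_zero_or_pos with rfl | hn
        · simp
        · field_simp
  calc ∫ ω, ((n : ℝ)⁻¹ * ∑ k ∈ Finset.range n, f k ω) ^ 2 ∂μ
      ≤ ∫ ω, (n : ℝ)⁻¹ * ∑ k ∈ Finset.range n, f k ω ^ 2 ∂μ :=
        integral_mono_of_nonneg (ae_of_all _ fun ω => sq_nonneg _)
          ((integrable_finsetSum _ fun k _ => hint k).const_mul _) (ae_of_all _ hpt)
    _ = (n : ℝ)⁻¹ * ∑ k ∈ Finset.range n, ∫ ω, f k ω ^ 2 ∂μ := by
        rw [integral_const_mul, integral_finsetSum _ fun k _ => hint k]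

lemma integral_sq_sum_of_orthogonal {ι : Type*} {D : ι → Ω → ℝ} (hD : ∀ k, MemLp (D k) 2 μ)
    (horth : Pairwise fun j k => ∫ ω, D j ω * D k ω ∂μ = 0) (s : Finset ι) :
    ∫ ω, (∑ k ∈ s, D k ω) ^ 2 ∂μ = ∑ k ∈ s, ∫ ω, D k ω ^ 2 ∂μ := by
  have hint : ∀ j k, Integrable (fun ω => D j ω * D k ω) μ := fun j k =>
    (hD j).integrable_mul (hD k)
  simp_rw [sq, Finset.sum_mul_sum]
  rw [integral_finsetSum _ fun j _ => integrable_finsetSum _ fun k _ => hint j k]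
  refine Finset.sum_congr rfl fun j hj => ?_
  rw [integral_finsetSum _ fun k _ => hint j k]
  exact Finset.sum_eq_single_of_mem j hj fun k _ hkj => horth (Ne.symm hkj)

lemma tendstoInMeasure_average_zero_of_orthogonal [IsFiniteMeasure μ] {D : ℕ → Ω → ℝ} {K : ℝ}
    (hD : ∀ k, MemLp (D k) 2 μ) (hK : ∀ k, ∫ ω, D k ω ^ 2 ∂μ ≤ K)
    (horth : Pairwise fun j k => ∫ ω, D j ω * D k ω ∂μ = 0) :
    TendstoInMeasure μ (fun (n : ℕ) ω => (n : ℝ)⁻¹ * ∑ k ∈ Finset.range n, D k ω) atTop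
      (fun _ => 0) := by
  refine tendstoInMeasure_zero_of_tendsto_integral_sq (fun n =>
    ((memLp_finsetSum _ fun k _ => hD k).const_mul _).integrable_sq) ?_
  refine squeeze_zero (fun n => integral_nonneg fun ω => sq_nonneg _) (fun n => ?_)
    (by simpa using tendsto_inv_atTop_nhds_zero_nat.mul_const K)
  simp_rw [mul_pow]
  rw [integral_const_mul, integral_sq_sum_of_orthogonal hD horth]
  calc (n : ℝ)⁻¹ ^ 2 * ∑ k ∈ Finset.range n, ∫ ω, D k ω ^ 2 ∂μ
      ≤ (n : ℝ)⁻¹ ^ 2 * (n * K) := by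
        gcongr
        simpa using Finset.sum_le_sum fun k (_ : k ∈ Finset.range n) => hK k
    _ = (n : ℝ)⁻¹ * K := by
        rcases n.eq_zero_or_pos with rfl | hn
        · simp
        · field_simp

lemma TendstoInMeasure.cesaro [IsFiniteMeasure μ] {f : ℕ → Ω → ℝ} {g : Ω → ℝ} {C : ℝ}
    (hfm : ∀ n, AEStronglyMeasurable (f n) μ) (hbd : ∀ n, ∀ᵐ ω ∂μ, |f n ω| ≤ C)
    (h : TendstoInMeasure μ f atTop g) :
    TendstoInMeasure μ (fun (n : ℕ) ω => (n : ℝ)⁻¹ * ∑ k ∈ Finset.range n, f k ω) atTop g := by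
  set d : ℕ → Ω → ℝ := fun k ω => f k ω - g ω
  have hdm : ∀ k, AEStronglyMeasurable (d k) μ := fun k =>
    (hfm k).sub (h.aestronglyMeasurable hfm)
  have hdbd : ∀ k, ∀ᵐ ω ∂μ, |d k ω| ≤ 2 * C := fun k => by
    filter_upwards [hbd k, ae_abs_le_of_tendstoInMeasure hbd h] with ω h₁ h₂
    linarith [abs_sub (f k ω) (g ω)]
  have hd : ∀ k, MemLp (d k) 2 μ := fun k =>
    MemLp.of_bound (hdm k) _ ((hdbd k).mono fun ω hω => by rwa [Real.norm_eq_abs])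
  have hd2 : ∀ k, Integrable (fun ω => d k ω ^ 2) μ := fun k => (hd k).integrable_sq
  have hint : Tendsto (fun k => ∫ ω, d k ω ^ 2 ∂μ) atTop (𝓝 0) := by
    have hsq : TendstoInMeasure μ (fun k ω => d k ω ^ 2) atTop (fun _ => (0 : ℝ) ^ 2) :=
      (tendstoInMeasure_iff_sub_tendstoInMeasure_zero.1 h).continuous_comp (continuous_pow 2) hdm
    have hsqbd : ∀ k, ∀ᵐ ω ∂μ, |d k ω ^ 2| ≤ (2 * C) ^ 2 := fun k =>
      (hdbd k).mono fun ω hω => by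
        rw [abs_pow]
        exact pow_le_pow_left₀ (abs_nonneg _) hω 2
    simpa using tendsto_integral_of_tendstoInMeasure_of_abs_le (fun k => (hdm k).pow 2) hsqbd hsq
  have havg : TendstoInMeasure μ (fun (n : ℕ) ω => (n : ℝ)⁻¹ * ∑ k ∈ Finset.range n, d k ω)
      atTop (fun _ => 0) :=
    tendstoInMeasure_zero_of_tendsto_integral_sq (fun n =>
      ((memLp_finsetSum _ fun k _ => hd k).const_mul _).integrable_sq)
      (squeeze_zero (fun n => integral_nonneg fun ω => sq_nonneg _)
        (integral_sq_average_le hd2) hint.cesaro)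
  rw [tendstoInMeasure_iff_sub_tendstoInMeasure_zero]
  refine havg.congr' ?_ EventuallyEq.rfl
  filter_upwards [eventually_ne_atTop 0] with n hn
  refine ae_of_all _ fun ω => ?_
  simp only [d, Finset.sum_sub_distrib, Finset.sum_const, Finset.card_range, nsmul_eq_mul]
  field_simp

lemma tendstoInMeasure_const_of_tendsto_integral_sq [IsProbabilityMeasure μ]
    {g : ℕ → Ω → ℝ} {m : ℝ} (hg : ∀ n, MemLp (g n) 2 μ)
    (h₁ : Tendsto (fun n => ∫ ω, g n ω ∂μ) atTop (𝓝 m))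
    (h₂ : Tendsto (fun n => ∫ ω, g n ω ^ 2 ∂μ) atTop (𝓝 (m ^ 2))) :
    TendstoInMeasure μ g atTop (fun _ => m) := by
  have hexpand : ∀ n, ∫ ω, (g n ω - m) ^ 2 ∂μ
      = ∫ ω, g n ω ^ 2 ∂μ - 2 * m * ∫ ω, g n ω ∂μ + m ^ 2 := fun n => by
    have hsq := (hg n).integrable_sq
    have hint : Integrable (fun ω => 2 * g n ω * m) μ :=
      (((hg n).integrable one_le_two).const_mul 2).mul_const m
    have hdiff : Integrable (fun ω => g n ω ^ 2 - 2 * g n ω * m) μ := hsq.sub hint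
    simp_rw [sub_sq]
    rw [integral_add hdiff (integrable_const _), integral_sub hsq hint,
      integral_mul_const, integral_const_mul]
    simp only [integral_const, probReal_univ, smul_eq_mul, one_mul]
    ring
  rw [tendstoInMeasure_iff_sub_tendstoInMeasure_zero]
  refine tendstoInMeasure_zero_of_tendsto_integral_sq
    (fun n => ((hg n).sub (memLp_const m)).integrable_sq) ?_
  simp_rw [hexpand]
  convert (h₂.sub (h₁.const_mul (2 * m))).add_const (m ^ 2) using 2
  ring

end InMeasure

section MartingaleDifferences

lemma integral_mul_condExp_of_stronglyMeasurable_left {m m0 : MeasurableSpace Ω}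
    {μ : Measure Ω} (hm : m ≤ m0) [SigmaFinite (μ.trim hm)] {Z Y : Ω → ℝ}
    (hZ : StronglyMeasurable[m] Z) (hZY : Integrable (Z * Y) μ) (hY : Integrable Y μ) :
    ∫ ω, Z ω * μ[Y | m] ω ∂μ = ∫ ω, Z ω * Y ω ∂μ :=
  (integral_congr_ae (condExp_mul_of_stronglyMeasurable_left hZ hZY hY).symm).trans
    (integral_condExp hm)

variable {m0 : MeasurableSpace Ω} {μ : Measure Ω} {ℱ : ℕ → MeasurableSpace Ω}
  {Y : ℕ → Ω → ℝ}

lemma pairwise_integral_mul_sub_condExp_eq_zero [IsFiniteMeasure μ] (hmono : Monotone ℱ)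
    (hle : ∀ n, ℱ n ≤ m0) (hY : ∀ n, StronglyMeasurable[ℱ (n + 1)] (Y n))
    (hY2 : ∀ n, MemLp (Y n) 2 μ) :
    Pairwise fun j k =>
      ∫ ω, (Y j ω - μ[Y j | ℱ j] ω) * (Y k ω - μ[Y k | ℱ k] ω) ∂μ = 0 := by
  have hD2 : ∀ n, MemLp (fun ω => Y n ω - μ[Y n | ℱ n] ω) 2 μ := fun n =>
    (hY2 n).sub ((hY2 n).condExp one_le_two)
  have horth : ∀ j k, j < k →
      ∫ ω, (Y j ω - μ[Y j | ℱ j] ω) * (Y k ω - μ[Y k | ℱ k] ω) ∂μ = 0 := by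
    intro j k hjk
    have hZ : StronglyMeasurable[ℱ k] fun ω => Y j ω - μ[Y j | ℱ j] ω :=
      ((hY j).mono (hmono hjk)).sub (stronglyMeasurable_condExp.mono (hmono hjk.le))
    have hZY : Integrable (fun ω => (Y j ω - μ[Y j | ℱ j] ω) * Y k ω) μ :=
      (hD2 j).integrable_mul (hY2 k)
    have hZc : Integrable (fun ω => (Y j ω - μ[Y j | ℱ j] ω) * μ[Y k | ℱ k] ω) μ :=
      (hD2 j).integrable_mul ((hY2 k).condExp one_le_two)
    simp_rw [mul_sub]
    rw [integral_sub hZY hZc, integral_mul_condExp_of_stronglyMeasurable_left (hle k) hZ hZY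
      ((hY2 k).integrable one_le_two), sub_self]
  intro j k hjk
  rcases hjk.lt_or_gt with h | h
  · exact horth j k h
  · simpa only [mul_comm] using horth k j h

lemma tendstoInMeasure_average_sub_condExp [IsProbabilityMeasure μ] (hmono : Monotone ℱ)
    (hle : ∀ n, ℱ n ≤ m0) (hY : ∀ n, StronglyMeasurable[ℱ (n + 1)] (Y n)) {C : ℝ}
    (hbd : ∀ n, ∀ᵐ ω ∂μ, |Y n ω| ≤ C) :
    TendstoInMeasure μ
      (fun (n : ℕ) ω => (n : ℝ)⁻¹ * ∑ k ∈ Finset.range n, (Y k ω - μ[Y k | ℱ k] ω))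
      atTop (fun _ => 0) := by
  have hY2 : ∀ n, MemLp (Y n) 2 μ := fun n =>
    MemLp.of_bound ((hY n).mono (hle _)).aestronglyMeasurable C
      ((hbd n).mono fun ω hω => by rwa [Real.norm_eq_abs])
  have hDbd : ∀ n, ∀ᵐ ω ∂μ, |Y n ω - μ[Y n | ℱ n] ω| ≤ 2 * C := fun n => by
    filter_upwards [hbd n, ae_bdd_abs_condExp_of_ae_bdd_abs (m := ℱ n) (hbd n)] with ω h₁ h₂
    linarith [abs_sub (Y n ω) (μ[Y n | ℱ n] ω)]
  refine tendstoInMeasure_average_zero_of_orthogonal (K := (2 * C) ^ 2)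
    (fun n => (hY2 n).sub ((hY2 n).condExp one_le_two)) (fun n => ?_)
    (pairwise_integral_mul_sub_condExp_eq_zero hmono hle hY hY2)
  calc ∫ ω, (Y n ω - μ[Y n | ℱ n] ω) ^ 2 ∂μ ≤ ∫ _ω, (2 * C) ^ 2 ∂μ := by
        refine integral_mono_ae ((hY2 n).sub ((hY2 n).condExp one_le_two)).integrable_sq
          (integrable_const _) ((hDbd n).mono fun ω hω => ?_)
        exact (sq_abs _).symm.trans_le (pow_le_pow_left₀ (abs_nonneg _) hω 2)
    _ = (2 * C) ^ 2 := by simp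

lemma tendstoInMeasure_average_of_tendstoInMeasure_condExp [IsProbabilityMeasure μ]
    (hmono : Monotone ℱ) (hle : ∀ n, ℱ n ≤ m0) (hY : ∀ n, StronglyMeasurable[ℱ (n + 1)] (Y n))
    {C : ℝ} (hbd : ∀ n, ∀ᵐ ω ∂μ, |Y n ω| ≤ C) {l : Ω → ℝ}
    (h : TendstoInMeasure μ (fun n => μ[Y n | ℱ n]) atTop l) :
    TendstoInMeasure μ (fun (n : ℕ) ω => (n : ℝ)⁻¹ * ∑ k ∈ Finset.range n, Y k ω) atTop l := by
  have hcm : ∀ n, AEStronglyMeasurable (μ[Y n | ℱ n]) μ := fun n =>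
    (stronglyMeasurable_condExp.mono (hle n)).aestronglyMeasurable
  have hYm : ∀ n, AEStronglyMeasurable (Y n) μ := fun n =>
    ((hY n).mono (hle _)).aestronglyMeasurable
  have hsum := (tendstoInMeasure_average_sub_condExp hmono hle hY hbd).add
    (fun n => ?_) (fun n => ?_) (h.cesaro hcm fun n => ae_bdd_abs_condExp_of_ae_bdd_abs (hbd n))
  · refine hsum.congr (fun n => ae_of_all _ fun ω => ?_) (ae_of_all _ fun ω => zero_add _)
    simp only [Finset.sum_sub_distrib]
    ring
  · exact (Finset.aestronglyMeasurable_fun_sum _ fun k _ => (hYm k).sub (hcm k)).const_mul _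
  · exact (Finset.aestronglyMeasurable_fun_sum _ fun k _ => hcm k).const_mul _

end MartingaleDifferences

end MeasureTheory

section Predictive

variable [MeasurableSpace S] {X : ℕ → Ω → S}

lemma Filt_mono : Monotone (Filt X) := fun _ _ h =>
  biSup_mono fun _ hi => Finset.mem_range.2 ((Finset.mem_range.1 hi).trans_le h)

lemma measurable_Filt_succ (n : ℕ) : Measurable[Filt X (n + 1)] (X n) :=
  Measurable.of_comap_le (le_iSup₂ (f := fun i (_ : i ∈ Finset.range (n + 1)) =>
    MeasurableSpace.comap (X i) inferInstance) n (Finset.self_mem_range_succ n))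

variable [MeasurableSpace Ω] {P : Measure Ω}

lemma Filt_le (hX : ∀ i, Measurable (X i)) (n : ℕ) : Filt X n ≤ ‹MeasurableSpace Ω› :=
  iSup₂_le fun i _ => (hX i).comap_le

lemma integral_predMean [IsFiniteMeasure P] (hX : ∀ i, Measurable (X i)) (f : S → ℝ) (n : ℕ) :
    ∫ ω, predMean P X f n ω ∂P = ∫ ω, f (X n ω) ∂P :=
  integral_condExp (Filt_le hX n)

lemma aestronglyMeasurable_predMean (hX : ∀ i, Measurable (X i)) (f : S → ℝ) (n : ℕ) :
    AEStronglyMeasurable (predMean P X f n) P :=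
  (stronglyMeasurable_condExp.mono (Filt_le hX n)).aestronglyMeasurable

lemma ae_abs_predMean_le {f : S → ℝ} {C : ℝ} (hC : ∀ x, |f x| ≤ C) (n : ℕ) :
    ∀ᵐ ω ∂P, |predMean P X f n ω| ≤ C :=
  ae_bdd_abs_condExp_of_ae_bdd_abs (ae_of_all _ fun _ => hC _)

lemma integral_indicator_one_comp (hX : ∀ i, Measurable (X i)) {B : Set S}
    (hB : MeasurableSet B) (n : ℕ) :
    ∫ ω, B.indicator 1 (X n ω) ∂P = (P (X n ⁻¹' B)).toReal := by
  rw [← measureReal_def, ← integral_indicator_one (hX n hB)]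
  rfl

variable [IsProbabilityMeasure P] {f : S → ℝ} {C : ℝ}

lemma integral_comp_add_one (hX : ∀ i, Measurable (X i)) (hf : Measurable f)
    (hC : ∀ x, |f x| ≤ C) (n : ℕ) :
    ∫ ω, (f + 1) (X n ω) ∂P = ∫ ω, f (X n ω) ∂P + 1 := by
  have hfX : Integrable (fun ω => f (X n ω)) P := Integrable.of_bound
    (hf.comp (hX n)).aestronglyMeasurable C (ae_of_all _ fun ω => hC (X n ω))
  simp [integral_add hfX (integrable_const 1)]

lemma ae_eq_const_of_tendstoInMeasure_predMean (hX : ∀ i, Measurable (X i))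
    (hf : Measurable f) (hC : ∀ x, |f x| ≤ C) {l : Ω → ℝ} {c : ℝ}
    (hl : TendstoInMeasure P (fun n => predMean P X f n) atTop l)
    (hc : TendstoInMeasure P (fun n ω => (∑ i ∈ Finset.range n, f (X i ω)) / n) atTop
      (fun _ => c)) :
    l =ᵐ[P] fun _ => c := by
  have havg := tendstoInMeasure_average_of_tendstoInMeasure_condExp (Y := fun n ω => f (X n ω))
    Filt_mono (Filt_le hX) (fun n => (hf.comp (measurable_Filt_succ n)).stronglyMeasurable)
    (fun n => ae_of_all _ fun _ => hC _) hl
  refine tendstoInMeasure_ae_unique (havg.congr_left fun n => ae_of_all _ fun ω => ?_) hc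
  exact (div_eq_inv_mul _ _).symm

lemma tendsto_integral_and_integral_predMean_sq (hX : ∀ i, Measurable (X i)) (hf : Measurable f)
    (hC : ∀ x, |f x| ≤ C) {l : Ω → ℝ} {c : ℝ}
    (hl : TendstoInMeasure P (fun n => predMean P X f n) atTop l)
    (hc : TendstoInMeasure P (fun n ω => (∑ i ∈ Finset.range n, f (X i ω)) / n) atTop
      (fun _ => c)) :
    Tendsto (fun n => ∫ ω, f (X n ω) ∂P) atTop (𝓝 c) ∧
      Tendsto (fun n => ∫ ω, predMean P X f n ω ^ 2 ∂P) atTop (𝓝 (c ^ 2)) := by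
  have hconst := hl.congr_right (ae_eq_const_of_tendstoInMeasure_predMean hX hf hC hl hc)
  have hm := aestronglyMeasurable_predMean (P := P) hX f
  have hbd := ae_abs_predMean_le (P := P) (X := X) hC
  constructor
  · simpa [integral_predMean hX] using tendsto_integral_of_tendstoInMeasure_of_abs_le hm hbd hconst
  · have hsqbd : ∀ n, ∀ᵐ ω ∂P, |predMean P X f n ω ^ 2| ≤ C ^ 2 := fun n =>
      (hbd n).mono fun ω hω => by
        rw [abs_sq]
        exact sq_le_sq.2 (hω.trans (le_abs_self C))
    simpa using tendsto_integral_of_tendstoInMeasure_of_abs_le (fun n => (hm n).pow 2) hsqbd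
      (hconst.continuous_comp (continuous_pow 2) hm)

lemma tendstoInMeasure_predMean_of_tendsto_integral (hX : ∀ i, Measurable (X i))
    (hC : ∀ x, |f x| ≤ C) {m : ℝ} (h₁ : Tendsto (fun n => ∫ ω, f (X n ω) ∂P) atTop (𝓝 m))
    (h₂ : Tendsto (fun n => ∫ ω, predMean P X f n ω ^ 2 ∂P) atTop (𝓝 (m ^ 2))) :
    TendstoInMeasure P (fun n => predMean P X f n) atTop (fun _ => m) :=
  tendstoInMeasure_const_of_tendsto_integral_sq
    (fun n => MemLp.of_bound (aestronglyMeasurable_predMean hX f n) C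
      ((ae_abs_predMean_le hC n).mono fun ω hω => by rwa [Real.norm_eq_abs]))
    (h₁.congr fun n => (integral_predMean hX f n).symm) h₂

end Predictive

theorem stmt4_general [MeasurableSpace Ω]
    [MeasurableSpace S]
    (P : Measure Ω) [IsProbabilityMeasure P]
    (X : ℕ → Ω → S) (hX : ∀ i, Measurable (X i))
    (hWLLN : ∀ f : S → ℝ, Measurable f → (∃ C, ∀ x, |f x| ≤ C) →
      ∃ c : ℝ, TendstoInMeasure P
        (fun n ω => (∑ i ∈ Finset.range n, f (X i ω)) / n) atTop (fun _ => c)) :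
    (∀ f : S → ℝ, Measurable f → (∃ C, ∀ x, |f x| ≤ C) →
      ∃ l : Ω → ℝ, TendstoInMeasure P (fun n => predMean P X f n) atTop l) ↔
    ((∀ B : Set S, MeasurableSet B →
        ∃ L : ℝ, Tendsto (fun n => (P (X n ⁻¹' B)).toReal) atTop (𝓝 L)) ∧
      (∀ f : S → ℝ, Measurable f → (∃ C, ∀ x, |f x| ≤ C) →
        ∃ L : ℝ, Tendsto (fun n => ∫ ω, (predMean P X f n ω) ^ 2 ∂P) atTop (𝓝 L) ∧
          Tendsto (fun n => (∫ ω, f (X n ω) ∂P) ^ 2) atTop (𝓝 L))) := by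
  constructor
  · intro hconv
    have hlim : ∀ f : S → ℝ, Measurable f → ∀ C, (∀ x, |f x| ≤ C) → ∃ c : ℝ,
        Tendsto (fun n => ∫ ω, f (X n ω) ∂P) atTop (𝓝 c) ∧
          Tendsto (fun n => ∫ ω, predMean P X f n ω ^ 2 ∂P) atTop (𝓝 (c ^ 2)) := by
      intro f hf C hC
      obtain ⟨l, hl⟩ := hconv f hf ⟨C, hC⟩
      obtain ⟨c, hc⟩ := hWLLN f hf ⟨C, hC⟩
      exact ⟨c, tendsto_integral_and_integral_predMean_sq hX hf hC hl hc⟩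
    refine ⟨fun B hB => ?_, fun f hf ⟨C, hC⟩ => ?_⟩
    · obtain ⟨c, hc, -⟩ := hlim (B.indicator 1) (measurable_one.indicator hB) 1
        fun x => by by_cases hx : x ∈ B <;> simp [hx]
      exact ⟨c, hc.congr (integral_indicator_one_comp hX hB)⟩
    · obtain ⟨c, hc, hc2⟩ := hlim f hf C hC
      exact ⟨c ^ 2, hc2, hc.pow 2⟩
  · rintro ⟨-, hsq⟩ f hf ⟨C, hC⟩
    obtain ⟨L, hL, hLa⟩ := hsq f hf ⟨C, hC⟩
    obtain ⟨L', -, hLa'⟩ := hsq (f + 1) (hf.add measurable_const)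
      ⟨C + 1, fun x => (abs_add_le _ _).trans (by simpa using hC x)⟩
    have hmean := tendsto_of_tendsto_sq_of_tendsto_add_one_sq hLa
      (hLa'.congr fun n => by rw [integral_comp_add_one hX hf hC n])
    refine ⟨_, tendstoInMeasure_predMean_of_tendsto_integral hX hC hmean ?_⟩
    rwa [tendsto_nhds_unique (hmean.pow 2) hLa]

/-- Theorem `09ilmw3`: if each empirical mean `μ_n(f)` converges in probability
to a degenerate (constant) limit, then `α_n(f)` converges in probability for each bounded Borel
`f` iff `lim_n P(X_n ∈ B)` exists for every Borel `B` and
`lim_n E[α_n(f)²] = lim_n (E[f(X_n)])²` for each bounded Borel `f`. -/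
theorem stmt4 [MeasurableSpace Ω]
    [TopologicalSpace S] [PolishSpace S] [MeasurableSpace S] [BorelSpace S]
    (P : Measure Ω) [IsProbabilityMeasure P]
    (X : ℕ → Ω → S) (hX : ∀ i, Measurable (X i))
    (hWLLN : ∀ f : S → ℝ, Measurable f → (∃ C, ∀ x, |f x| ≤ C) →
      ∃ c : ℝ, TendstoInMeasure P
        (fun n ω => (∑ i ∈ Finset.range n, f (X i ω)) / n) atTop (fun _ => c)) :
    (∀ f : S → ℝ, Measurable f → (∃ C, ∀ x, |f x| ≤ C) →
      ∃ l : Ω → ℝ, TendstoInMeasure P (fun n => predMean P X f n) atTop l) ↔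
    ((∀ B : Set S, MeasurableSet B →
        ∃ L : ℝ, Tendsto (fun n => (P (X n ⁻¹' B)).toReal) atTop (𝓝 L)) ∧
      (∀ f : S → ℝ, Measurable f → (∃ C, ∀ x, |f x| ≤ C) →
        ∃ L : ℝ, Tendsto (fun n => ∫ ω, (predMean P X f n ω) ^ 2 ∂P) atTop (𝓝 L) ∧
          Tendsto (fun n => (∫ ω, f (X n ω) ∂P) ^ 2) atTop (𝓝 L))) :=
  stmt4_general P X hX hWLLN
end

section
/- If X is conditionally identically distributed (c.i.d.), then for each bounded Borel function f : S → ℝ the sequence α_n(f) converges almost surely as n → ∞. -/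
open MeasureTheory ProbabilityTheory Filter Topology
open scoped ENNReal NNReal

variable {Ω S : Type*}

/-- `X` is conditionally identically distributed (c.i.d.):
`(X_1,…,X_n,X_k) ∼ (X_1,…,X_n,X_{n+1})` for all `k > n ≥ 0` (with the present indexing,
`(X_0,…,X_{n-1},X_k) ∼ (X_0,…,X_{n-1},X_n)` for all `k ≥ n ≥ 0`). -/
def CID [MeasurableSpace Ω] [MeasurableSpace S] (P : Measure Ω) (X : ℕ → Ω → S) : Prop :=
  ∀ n k : ℕ, n ≤ k →
    P.map (fun ω => ((fun i : Fin n => X i.val ω), X k ω)) =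
      P.map (fun ω => ((fun i : Fin n => X i.val ω), X n ω))

/-!
Under c.i.d. the law of `(X_0,…,X_{n-1},X_k)` does not depend on `k ≥ n`, so
`E[f(X_k) | 𝓕_n] = E[f(X_n) | 𝓕_n] = α_n(f)`. By the tower property `α_n(f)` is then a martingale
for `(𝓕_n)`; it is bounded by `sup |f|`, hence converges almost surely by Doob's martingale
convergence theorem.
-/

section LawOfPair

variable {β E : Type*} [MeasurableSpace Ω] [MeasurableSpace β] [MeasurableSpace S]
  [NormedAddCommGroup E] [NormedSpace ℝ E]
  {μ : Measure Ω} {V : Ω → β} {Y Z : Ω → S} {f : S → E}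

lemma setIntegral_preimage_eq_of_map_prod_eq (hV : Measurable V) (hY : Measurable Y)
    (hZ : Measurable Z) (hlaw : μ.map (fun ω => (V ω, Y ω)) = μ.map (fun ω => (V ω, Z ω)))
    (hf : StronglyMeasurable f) {B : Set β} (hB : MeasurableSet B) :
    ∫ ω in V ⁻¹' B, f (Y ω) ∂μ = ∫ ω in V ⁻¹' B, f (Z ω) ∂μ := by
  have hfst : StronglyMeasurable fun p : β × S => f p.2 := hf.comp_measurable measurable_snd
  have hset : MeasurableSet (B ×ˢ (Set.univ : Set S)) := hB.prod MeasurableSet.univ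
  have hpair : ∀ W : Ω → S, Measurable W → ∫ ω in V ⁻¹' B, f (W ω) ∂μ =
      ∫ p in B ×ˢ Set.univ, f p.2 ∂(μ.map fun ω => (V ω, W ω)) := fun W hW => by
    rw [setIntegral_map hset hfst.aestronglyMeasurable (hV.prodMk hW).aemeasurable,
      Set.mk_preimage_prod, Set.preimage_univ, Set.inter_univ]
  rw [hpair Y hY, hpair Z hZ, hlaw]

lemma condExp_comap_ae_eq_of_map_prod_eq [CompleteSpace E] [IsFiniteMeasure μ]
    (hV : Measurable V) (hY : Measurable Y) (hZ : Measurable Z)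
    (hlaw : μ.map (fun ω => (V ω, Y ω)) = μ.map (fun ω => (V ω, Z ω)))
    (hf : StronglyMeasurable f) (hint : Integrable (fun ω => f (Z ω)) μ) :
    μ[fun ω => f (Y ω) | MeasurableSpace.comap V ‹_›]
      =ᵐ[μ] μ[fun ω => f (Z ω) | MeasurableSpace.comap V ‹_›] := by
  have hfst : AEStronglyMeasurable (fun p : β × S => f p.2) (μ.map fun ω => (V ω, Y ω)) :=
    (hf.comp_measurable measurable_snd).aestronglyMeasurable
  have hintY : Integrable (fun ω => f (Y ω)) μ := by
    refine (integrable_map_measure hfst (hV.prodMk hY).aemeasurable).mp ?_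
    rw [hlaw] at hfst ⊢
    exact (integrable_map_measure hfst (hV.prodMk hZ).aemeasurable).mpr hint
  refine ae_eq_condExp_of_forall_setIntegral_eq hV.comap_le hint
    (fun s _ _ => integrable_condExp.integrableOn) (fun s hs _ => ?_)
    stronglyMeasurable_condExp.aestronglyMeasurable
  obtain ⟨B, hB, rfl⟩ := hs
  rw [setIntegral_condExp hV.comap_le hintY ⟨B, hB, rfl⟩,
    setIntegral_preimage_eq_of_map_prod_eq hV hY hZ hlaw hf hB]

end LawOfPair

section Martingale

variable {ι : Type*} [Preorder ι] {E : Type*} [NormedAddCommGroup E] [NormedSpace ℝ E]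
  [CompleteSpace E] {m0 : MeasurableSpace Ω} {μ : Measure Ω}

lemma martingale_condExp_of_condExp_ae_eq {ℱ : Filtration ι m0} [SigmaFiniteFiltration μ ℱ]
    {g : ι → Ω → E} (hg : ∀ i j, i ≤ j → μ[g j | ℱ i] =ᵐ[μ] μ[g i | ℱ i]) :
    Martingale (fun i => μ[g i | ℱ i]) ℱ μ :=
  ⟨fun _ => stronglyMeasurable_condExp, fun i j hij =>
    (condExp_condExp_of_le (ℱ.mono hij) (ℱ.le j)).trans (hg i j hij)⟩

lemma MeasureTheory.Martingale.exists_ae_tendsto_of_abs_le [IsFiniteMeasure μ]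
    {ℱ : Filtration ℕ m0} {f : ℕ → Ω → ℝ} (hf : Martingale f ℱ μ) {R : ℝ}
    (hR : ∀ n, ∀ᵐ ω ∂μ, |f n ω| ≤ R) :
    ∀ᵐ ω ∂μ, ∃ c, Tendsto (fun n => f n ω) atTop (𝓝 c) := by
  refine hf.submartingale.exists_ae_tendsto_of_bdd (R := measureUnivNNReal μ * R.toNNReal)
    fun n => ?_
  have := eLpNorm_le_of_ae_bound (p := 1) (f := f n) (C := R) (hR n)
  simpa [ENNReal.ofReal] using this

end Martingale

lemma Filt_eq_comap [MeasurableSpace S] (X : ℕ → Ω → S) (n : ℕ) :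
    Filt X n = MeasurableSpace.comap (fun ω (i : Fin n) => X i ω) MeasurableSpace.pi := by
  simp_rw [Filt, MeasurableSpace.pi, MeasurableSpace.comap_iSup, MeasurableSpace.comap_comp,
    Function.comp_def]
  apply le_antisymm
  · exact iSup₂_le fun i hi => le_iSup_of_le ⟨i, Finset.mem_range.mp hi⟩ le_rfl
  · exact iSup_le fun i => le_iSup₂_of_le i.val (Finset.mem_range.mpr i.isLt) le_rfl

def Filt.toFiltration [MeasurableSpace Ω] [MeasurableSpace S] (X : ℕ → Ω → S)
    (hX : ∀ i, Measurable (X i)) : Filtration ℕ ‹MeasurableSpace Ω› where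
  seq := Filt X
  mono' _ _ hnm := iSup₂_le fun i hi => le_iSup₂_of_le i
    (Finset.mem_range.mpr ((Finset.mem_range.mp hi).trans_le hnm)) le_rfl
  le' _ := iSup₂_le fun i _ => (hX i).comap_le

lemma CID.condExp_ae_eq [MeasurableSpace Ω] [MeasurableSpace S] {P : Measure Ω}
    [IsFiniteMeasure P] {X : ℕ → Ω → S} (hX : ∀ i, Measurable (X i)) (hcid : CID P X)
    {f : S → ℝ} (hf : StronglyMeasurable f) (hint : ∀ n, Integrable (fun ω => f (X n ω)) P)
    {n k : ℕ} (hnk : n ≤ k) :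
    P[fun ω => f (X k ω) | Filt X n] =ᵐ[P] P[fun ω => f (X n ω) | Filt X n] := by
  rw [Filt_eq_comap]
  exact condExp_comap_ae_eq_of_map_prod_eq (measurable_pi_lambda _ fun i => hX i) (hX k) (hX n)
    (hcid n k hnk) hf (hint n)

theorem stmt10_general [MeasurableSpace Ω] [MeasurableSpace S]
    (P : Measure Ω) [IsProbabilityMeasure P]
    (X : ℕ → Ω → S) (hX : ∀ i, Measurable (X i))
    (hcid : CID P X) :
    ∀ f : S → ℝ, Measurable f → (∃ C, ∀ x, |f x| ≤ C) →
      ∀ᵐ ω ∂P, ∃ L : ℝ, Tendsto (fun n => predMean P X f n ω) atTop (𝓝 L) := by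
  rintro f hf ⟨C, hC⟩
  have hint : ∀ n, Integrable (fun ω => f (X n ω)) P := fun n =>
    .of_bound (hf.comp (hX n)).aestronglyMeasurable _ (.of_forall fun ω => hC (X n ω))
  have hmart : Martingale (predMean P X f) (Filt.toFiltration X hX) P :=
    martingale_condExp_of_condExp_ae_eq fun _ _ hnk =>
      CID.condExp_ae_eq hX hcid hf.stronglyMeasurable hint hnk
  exact hmart.exists_ae_tendsto_of_abs_le fun n =>
    ae_bdd_abs_condExp_of_ae_bdd_abs (.of_forall fun ω => hC (X n ω))

/-- if `X` is c.i.d., then `α_n(f)` converges almost surely for each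
bounded Borel `f`. -/
theorem stmt10 [MeasurableSpace Ω]
    [TopologicalSpace S] [PolishSpace S] [MeasurableSpace S] [BorelSpace S]
    (P : Measure Ω) [IsProbabilityMeasure P]
    (X : ℕ → Ω → S) (hX : ∀ i, Measurable (X i))
    (hcid : CID P X) :
    ∀ f : S → ℝ, Measurable f → (∃ C, ∀ x, |f x| ≤ C) →
      ∀ᵐ ω ∂P, ∃ L : ℝ, Tendsto (fun n => predMean P X f n ω) atTop (𝓝 L) :=
  stmt10_general P X hX hcid
end
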